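/- The rewrite relation on self-join-free Boolean conjunctive queries terminates: there is no infinite sequence q0 ⇝ q1 ⇝ q2 ⇝ … of rewrite steps in which each step produces a query different from its predecessor. -/

import Mathlib

/-- An atom of a self-join-free Boolean conjunctive query: a relation symbol together
with its set of variables, marked endogenous (`endo = true`) or exogenous. -/
structure QAtom (Rel Var : Type) where
  rel : Rel
  vars : Finset Var
  endo : Bool
deriving DecidableEq

variable {Rel Var : Type} [DecidableEq Rel] [DecidableEq Var]

/-- The set `Var(q)` of variables of a query. -/
def qVars (q : Finset (QAtom Rel Var)) : Finset Var := q.sup (·.vars)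

/-- `sg q x` is the set of atoms of `q` containing the variable `x`. -/
def sg (q : Finset (QAtom Rel Var)) (x : Var) : Finset (QAtom Rel Var) :=
  q.filter (fun g => x ∈ g.vars)

/-- `q` is self-join-free: no relation symbol occurs in two distinct atoms. -/
def selfJoinFree (q : Finset (QAtom Rel Var)) : Prop :=
  ∀ g ∈ q, ∀ g' ∈ q, g.rel = g'.rel → g = g'

/-- `q` is linear: its atoms admit a total order in which, for every variable `x`,
the atoms containing `x` are consecutive (the endogenous/exogenous marking is ignored). -/
def isLinear (q : Finset (QAtom Rel Var)) : Prop :=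
  ∃ f : QAtom Rel Var → ℕ, Set.InjOn f q ∧
    ∀ (x : Var), ∀ g₁ ∈ q, ∀ g₂ ∈ q, ∀ g₃ ∈ q,
      f g₁ ≤ f g₂ → f g₂ ≤ f g₃ → x ∈ g₁.vars → x ∈ g₃.vars → x ∈ g₂.vars

/-- The rewrite relation `⇝` on self-join-free conjunctive queries:
(1) delete a variable `x` from all atoms; (2) add a variable `y` to every atom
containing `x`, provided some atom contains both `x` and `y`; (3) delete an atom `g`,
provided `g` is exogenous or some other atom `g₀` satisfies `Var(g₀) ⊆ Var(g)`. -/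
inductive Rewrite : Finset (QAtom Rel Var) → Finset (QAtom Rel Var) → Prop where
  | delVar (q : Finset (QAtom Rel Var)) (x : Var) (hx : x ∈ qVars q) :
      Rewrite q (q.image fun g => ⟨g.rel, g.vars.erase x, g.endo⟩)
  | addVar (q : Finset (QAtom Rel Var)) (x y : Var)
      (h : ∃ g ∈ q, x ∈ g.vars ∧ y ∈ g.vars) :
      Rewrite q (q.image fun g => if x ∈ g.vars then ⟨g.rel, insert y g.vars, g.endo⟩ else g)
  | delAtom (q : Finset (QAtom Rel Var)) (g : QAtom Rel Var) (hg : g ∈ q)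
      (h : g.endo = false ∨ ∃ g₀ ∈ q, g₀ ≠ g ∧ g₀.vars ⊆ g.vars) :
      Rewrite q (q.erase g)

/-- The weakening relation `⊸`: dissociation adds to an exogenous atom a variable
occurring in an atom sharing a variable with it; domination re-marks an endogenous atom
`g` as exogenous provided some other endogenous atom `g₀` satisfies `Var(g₀) ⊆ Var(g)`. -/
inductive Weaken : Finset (QAtom Rel Var) → Finset (QAtom Rel Var) → Prop where
  | dissociate (q : Finset (QAtom Rel Var)) (g : QAtom Rel Var) (hg : g ∈ q)
      (hexo : g.endo = false) (v : Var)
      (h : ∃ g' ∈ q, g' ≠ g ∧ v ∈ g'.vars ∧ (g'.vars ∩ g.vars).Nonempty) :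
      Weaken q (insert ⟨g.rel, insert v g.vars, false⟩ (q.erase g))
  | dominate (q : Finset (QAtom Rel Var)) (g : QAtom Rel Var) (hg : g ∈ q)
      (hendo : g.endo = true)
      (h : ∃ g₀ ∈ q, g₀ ≠ g ∧ g₀.endo = true ∧ g₀.vars ⊆ g.vars) :
      Weaken q (insert ⟨g.rel, g.vars, false⟩ (q.erase g))

/-- `q` is weakly linear: some query obtained from `q` by a finite sequence of
weakenings is linear. -/
def weaklyLinear (q : Finset (QAtom Rel Var)) : Prop :=
  ∃ q', Relation.ReflTransGen Weaken q q' ∧ isLinear q'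

/-- `q` is final: it is not weakly linear, but every query obtained from it by a
single rewrite step is weakly linear. -/
def isFinal (q : Finset (QAtom Rel Var)) : Prop :=
  ¬ weaklyLinear q ∧ ∀ q', Rewrite q q' → weaklyLinear q'

/-!
The pair `(M q, N q)` decreases lexicographically along every proper rewrite step, where
`M q = ∑_{g ∈ q} |Var(q) \ Var(g)|` (`missingVars`) counts the variables missing from atoms
and `N q = ∑_{g ∈ q} (1 + |Var(g)|)` (`querySize`) is the size of `q`. Deleting a variable
or an atom never makes an atom miss more variables and strictly shrinks `N`. Adding `y`
beside `x` leaves `Var(q)` unchanged, since `y` already occurs in `q`; if the step changes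
`q`, some atom gains `y` and so `M` drops. Self-join-freeness makes every atom map that
preserves relation symbols injective on `q`, so that sums over the image are sums over `q`.
-/

open Finset

section

variable {Rel Var : Type}

lemma selfJoinFree.injOn {q : Finset (QAtom Rel Var)} (hq : selfJoinFree q)
    {φ : QAtom Rel Var → QAtom Rel Var} (hφ : ∀ g, (φ g).rel = g.rel) : Set.InjOn φ q :=
  fun g₁ h₁ g₂ h₂ h => hq g₁ h₁ g₂ h₂ (by rw [← hφ g₁, ← hφ g₂, h])

end

namespace QAtom

variable {Rel Var : Type} [DecidableEq Var]

def eraseVar (x : Var) (g : QAtom Rel Var) : QAtom Rel Var :=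
  ⟨g.rel, g.vars.erase x, g.endo⟩

def insertVarIfMem (x y : Var) (g : QAtom Rel Var) : QAtom Rel Var :=
  if x ∈ g.vars then ⟨g.rel, insert y g.vars, g.endo⟩ else g

lemma eraseVar_rel (x : Var) (g : QAtom Rel Var) : (eraseVar x g).rel = g.rel := rfl

lemma insertVarIfMem_rel (x y : Var) (g : QAtom Rel Var) :
    (insertVarIfMem x y g).rel = g.rel := by
  unfold insertVarIfMem; split <;> rfl

lemma vars_subset_insertVarIfMem (x y : Var) (g : QAtom Rel Var) :
    g.vars ⊆ (insertVarIfMem x y g).vars := by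
  unfold insertVarIfMem; split
  · exact subset_insert _ _
  · exact Subset.rfl

lemma insertVarIfMem_vars_subset (x y : Var) (g : QAtom Rel Var) :
    (insertVarIfMem x y g).vars ⊆ insert y g.vars := by
  unfold insertVarIfMem; split
  · exact Subset.rfl
  · exact subset_insert _ _

end QAtom

section

variable {Rel Var : Type} [DecidableEq Var]

lemma mem_qVars {q : Finset (QAtom Rel Var)} {x : Var} :
    x ∈ qVars q ↔ ∃ g ∈ q, x ∈ g.vars := by
  simp [qVars, mem_sup]

lemma qVars_mono {q q' : Finset (QAtom Rel Var)} (h : q' ⊆ q) : qVars q' ⊆ qVars q :=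
  sup_mono h

end

open QAtom

def missingVars (q : Finset (QAtom Rel Var)) : ℕ := ∑ g ∈ q, #(qVars q \ g.vars)

def querySize (q : Finset (QAtom Rel Var)) : ℕ := ∑ g ∈ q, (1 + #g.vars)

def rewriteMeasure (q : Finset (QAtom Rel Var)) : ℕ ×ₗ ℕ :=
  toLex (missingVars q, querySize q)

section EraseVar

variable {q : Finset (QAtom Rel Var)} {x : Var}

lemma qVars_image_eraseVar : qVars (q.image (eraseVar x)) = (qVars q).erase x := by
  ext a
  simp only [mem_qVars, mem_image, exists_exists_and_eq_and, eraseVar, mem_erase]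
  constructor
  · rintro ⟨g, hg, hax, ha⟩
    exact ⟨hax, g, hg, ha⟩
  · rintro ⟨hax, g, hg, ha⟩
    exact ⟨g, hg, hax, ha⟩

lemma missingVars_image_eraseVar_le (hq : selfJoinFree q) :
    missingVars (q.image (eraseVar x)) ≤ missingVars q := by
  rw [missingVars, sum_image (hq.injOn (eraseVar_rel x)), qVars_image_eraseVar]
  refine sum_le_sum fun g _ => card_le_card ?_
  rw [eraseVar, ← erase_sdiff_distrib]
  exact erase_subset _ _

lemma querySize_image_eraseVar_lt (hq : selfJoinFree q) (hx : x ∈ qVars q) :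
    querySize (q.image (eraseVar x)) < querySize q := by
  rw [querySize, sum_image (hq.injOn (eraseVar_rel x))]
  obtain ⟨g, hg, hxg⟩ := mem_qVars.mp hx
  refine sum_lt_sum (fun g _ => ?_) ⟨g, hg, ?_⟩
  · exact Nat.add_le_add_left (card_le_card (erase_subset _ _)) 1
  · exact Nat.add_lt_add_left (card_erase_lt_of_mem hxg) 1

end EraseVar

section InsertVarIfMem

variable {q : Finset (QAtom Rel Var)} {x y : Var}

lemma qVars_image_insertVarIfMem (hy : y ∈ qVars q) :
    qVars (q.image (insertVarIfMem x y)) = qVars q := by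
  refine Subset.antisymm (fun a ha => ?_) (fun a ha => ?_)
  · obtain ⟨_, hg', ha⟩ := mem_qVars.mp ha
    obtain ⟨g, hg, rfl⟩ := mem_image.mp hg'
    rcases mem_insert.mp (insertVarIfMem_vars_subset x y g ha) with rfl | ha
    · exact hy
    · exact mem_qVars.mpr ⟨g, hg, ha⟩
  · obtain ⟨g, hg, ha⟩ := mem_qVars.mp ha
    exact mem_qVars.mpr ⟨_, mem_image_of_mem _ hg, vars_subset_insertVarIfMem x y g ha⟩

lemma exists_mem_notMem_of_image_insertVarIfMem_ne (hne : q.image (insertVarIfMem x y) ≠ q) :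
    ∃ g ∈ q, x ∈ g.vars ∧ y ∉ g.vars := by
  by_contra! h
  refine hne ((image_congr fun g hg => ?_).trans image_id)
  by_cases hx : x ∈ g.vars
  · simp [insertVarIfMem, hx, insert_eq_self.mpr (h g hg hx)]
  · simp [insertVarIfMem, hx]

lemma missingVars_image_insertVarIfMem_lt (hq : selfJoinFree q) (hy : y ∈ qVars q)
    (hne : q.image (insertVarIfMem x y) ≠ q) :
    missingVars (q.image (insertVarIfMem x y)) < missingVars q := by
  rw [missingVars, sum_image (hq.injOn (insertVarIfMem_rel x y)), qVars_image_insertVarIfMem hy]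
  obtain ⟨g, hg, hxg, hyg⟩ := exists_mem_notMem_of_image_insertVarIfMem_ne hne
  refine sum_lt_sum (fun g _ => card_le_card ?_) ⟨g, hg, card_lt_card ?_⟩
  · exact sdiff_subset_sdiff Subset.rfl (vars_subset_insertVarIfMem x y g)
  · refine ssubset_iff_of_subset (sdiff_subset_sdiff Subset.rfl
      (vars_subset_insertVarIfMem x y g)) |>.mpr ⟨y, mem_sdiff.mpr ⟨hy, hyg⟩, ?_⟩
    simp [insertVarIfMem, hxg]

end InsertVarIfMem

section EraseAtom

variable {q : Finset (QAtom Rel Var)} {g : QAtom Rel Var}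

lemma missingVars_erase_le : missingVars (q.erase g) ≤ missingVars q :=
  calc missingVars (q.erase g) ≤ ∑ g' ∈ q.erase g, #(qVars q \ g'.vars) :=
        sum_le_sum fun _ _ => card_le_card (sdiff_subset_sdiff (qVars_mono (erase_subset g q))
          Subset.rfl)
    _ ≤ missingVars q := sum_le_sum_of_subset (erase_subset g q)

lemma querySize_erase_lt (hg : g ∈ q) : querySize (q.erase g) < querySize q :=
  sum_lt_sum_of_subset (erase_subset g q) hg (notMem_erase g q) (by omega)
    fun _ _ _ => Nat.zero_le _

end EraseAtom

lemma Rewrite.rewriteMeasure_lt {q q' : Finset (QAtom Rel Var)} (hr : Rewrite q q')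
    (hq : selfJoinFree q) (hne : q' ≠ q) : rewriteMeasure q' < rewriteMeasure q := by
  rw [rewriteMeasure, rewriteMeasure, Prod.Lex.toLex_lt_toLex]
  cases hr with
  | delVar x hx =>
    exact (missingVars_image_eraseVar_le hq).lt_or_eq.imp_right
      fun h => ⟨h, querySize_image_eraseVar_lt hq hx⟩
  | addVar x y h =>
    obtain ⟨_, hg, -, hy⟩ := h
    exact Or.inl (missingVars_image_insertVarIfMem_lt hq (mem_qVars.mpr ⟨_, hg, hy⟩) hne)
  | delAtom g hg =>
    exact missingVars_erase_le.lt_or_eq.imp_right fun h => ⟨h, querySize_erase_lt hg⟩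

/-- The rewrite relation on self-join-free Boolean conjunctive queries
terminates: there is no infinite sequence `q0 ⇝ q1 ⇝ q2 ⇝ …` of rewrite steps in which
each step produces a query different from its predecessor. -/
theorem statement9 :
    ¬ ∃ f : ℕ → Finset (QAtom Rel Var),
      (∀ n, selfJoinFree (f n)) ∧
      (∀ n, Rewrite (f n) (f (n + 1)) ∧ f (n + 1) ≠ f n) := by
  rintro ⟨f, hsjf, hstep⟩
  obtain ⟨n, hn⟩ := WellFounded.not_rel_apply_succ (r := (· < ·)) (rewriteMeasure ∘ f)
  exact hn ((hstep n).1.rewriteMeasure_lt (hsjf n) (hstep n).2)
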